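/- Let (M, ω) be a symplectic manifold and N_1 ⊆ N_2 ⊆ ... ⊆ N_r ⊆ M compact symplectic submanifolds of dimensions 2k_1 < 2k_2 < ... < 2k_r. Define J(N_1,...,N_r) ∈ (C^∞(M))* by ⟨J(N), f⟩ = Σ_{i=1}^r ∫_{N_i} f ω^{k_i} (each N_i with Liouville orientation). If two such nested tuples (N'_1,...,N'_r) and (N''_1,...,N''_r) satisfy J(N') = J(N''), then N'_i = N''_i for all i. -/

import Mathlib

open Manifold MeasureTheory

private lemma stmt11_aux
    {E : Type*} [NormedAddCommGroup E] [NormedSpace ℝ E] [FiniteDimensional ℝ E]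
    {M : Type*} [TopologicalSpace M] [ChartedSpace E M]
    [IsManifold (𝓘(ℝ, E)) (⊤ : ℕ∞) M] [T2Space M]
    [MeasurableSpace M] [BorelSpace M]
    {r : ℕ}
    (N' N'' : Fin r → Set M)
    (hcpt'' : ∀ i, IsCompact (N'' i))
    (hnest'' : ∀ i j : Fin r, i ≤ j → N'' i ⊆ N'' j)
    (μ' μ'' : Fin r → Measure M)
    [∀ i, IsFiniteMeasure (μ' i)] [∀ i, IsFiniteMeasure (μ'' i)]
    (hconc'' : ∀ i, μ'' i (N'' i)ᶜ = 0)
    (hpos' : ∀ (i) (U : Set M), IsOpen U → (U ∩ N' i).Nonempty → 0 < μ' i U)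
    (hdet : ∀ i, N' i = N'' i → μ' i = μ'' i)
    (h : ∀ f : M → ℝ, ContMDiff (𝓘(ℝ, E)) (𝓘(ℝ)) (⊤ : ℕ∞) f →
      ∑ i, ∫ x, f x ∂(μ' i) = ∑ i, ∫ x, f x ∂(μ'' i))
    (i : Fin r) (heq : ∀ j, i < j → N' j = N'' j) : N' i ⊆ N'' i := by
  intro x hx
  by_contra hxn
  have hU : IsOpen (N'' i)ᶜ := (hcpt'' i).isClosed.isOpen_compl
  have hUx : (N'' i)ᶜ ∈ nhds x := hU.mem_nhds hxn
  obtain ⟨f, -, hf⟩ :=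
    ((SmoothBumpFunction.nhds_basis_tsupport (I := 𝓘(ℝ, E)) x).mem_iff).1 hUx
  have hcont : Continuous (⇑f) := f.contMDiff.continuous
  have hint : ∀ ν : Measure M, IsFiniteMeasure ν → Integrable (⇑f) ν := fun ν _ =>
    hcont.integrable_of_hasCompactSupport f.hasCompactSupport
  have hxsupp : x ∈ Function.support (⇑f) := by
    simp [Function.mem_support, f.eq_one]
  have hposi : 0 < ∫ y, f y ∂(μ' i) := by
    rw [integral_pos_iff_support_of_nonneg (fun y => f.nonneg) (hint _ inferInstance)]
    exact hpos' i _ f.isOpen_support ⟨x, hxsupp, hx⟩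
  have hsuppsub : Function.support (⇑f) ⊆ (N'' i)ᶜ :=
    subset_trans subset_closure hf
  have hzero : ∀ j : Fin r, ¬ i < j → ∫ y, f y ∂(μ'' j) = 0 := by
    intro j hj
    have hj' : j ≤ i := not_lt.1 hj
    have hae : (⇑f) =ᵐ[μ'' j] 0 := by
      refine measure_mono_null ?_ (hconc'' j)
      intro y hy
      have hy' : y ∈ Function.support (⇑f) := by
        simpa [Function.mem_support] using hy
      exact fun hyN => hsuppsub hy' (hnest'' j i hj' hyN)
    simpa using integral_congr_ae hae
  have hsum := h (⇑f) f.contMDiff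
  have hlt : ∑ j, ∫ y, f y ∂(μ'' j) < ∑ j, ∫ y, f y ∂(μ' j) := by
    refine Finset.sum_lt_sum (fun j _ => ?_) ⟨i, Finset.mem_univ i, ?_⟩
    · by_cases hj : i < j
      · rw [← hdet j (heq j hj)]
      · rw [hzero j hj]
        exact integral_nonneg fun y => f.nonneg
    · rw [hzero i (lt_irrefl i)]
      exact hposi
  linarith

/-- let `(M, ω)` be a symplectic manifold and consider nested tuples
`N 0 ⊆ N 1 ⊆ … ⊆ N (r-1)` of compact symplectic submanifolds of strictly increasing
dimensions `2 k 0 < … < 2 k (r-1)`, each carrying its Liouville measure `μ i`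
(representing `f ↦ ∫_{N i} f ω^{k i}`; these measures are finite, concentrated on `N i`,
positive on open sets meeting `N i`, and determined by the submanifold:
`N' i = N'' i → μ' i = μ'' i`).  If `⟨J(N'), f⟩ = Σᵢ ∫ f dμ' i = Σᵢ ∫ f dμ'' i = ⟨J(N''), f⟩`
for every smooth `f`, then `N' i = N'' i` for all `i`. -/
theorem stmt_11
    {E : Type*} [NormedAddCommGroup E] [NormedSpace ℝ E] [FiniteDimensional ℝ E]
    {M : Type*} [TopologicalSpace M] [ChartedSpace E M]
    [IsManifold (𝓘(ℝ, E)) (⊤ : ℕ∞) M] [T2Space M]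
    [MeasurableSpace M] [BorelSpace M]
    (r : ℕ) (k : Fin r → ℕ) (hk : StrictMono k)
    (N' N'' : Fin r → Set M)
    (hcpt' : ∀ i, IsCompact (N' i)) (hcpt'' : ∀ i, IsCompact (N'' i))
    (hnest' : ∀ i j : Fin r, i ≤ j → N' i ⊆ N' j)
    (hnest'' : ∀ i j : Fin r, i ≤ j → N'' i ⊆ N'' j)
    (μ' μ'' : Fin r → Measure M)
    [∀ i, IsFiniteMeasure (μ' i)] [∀ i, IsFiniteMeasure (μ'' i)]
    (hconc' : ∀ i, μ' i (N' i)ᶜ = 0) (hconc'' : ∀ i, μ'' i (N'' i)ᶜ = 0)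
    (hpos' : ∀ (i) (U : Set M), IsOpen U → (U ∩ N' i).Nonempty → 0 < μ' i U)
    (hpos'' : ∀ (i) (U : Set M), IsOpen U → (U ∩ N'' i).Nonempty → 0 < μ'' i U)
    (hdet : ∀ i, N' i = N'' i → μ' i = μ'' i)
    (h : ∀ f : M → ℝ, ContMDiff (𝓘(ℝ, E)) (𝓘(ℝ)) (⊤ : ℕ∞) f →
      ∑ i, ∫ x, f x ∂(μ' i) = ∑ i, ∫ x, f x ∂(μ'' i)) :
    ∀ i, N' i = N'' i := by
  have key : ∀ i : Fin r, (∀ j, i < j → N' j = N'' j) → N' i = N'' i := by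
    intro i heq
    refine subset_antisymm
      (stmt11_aux N' N'' hcpt'' hnest'' μ' μ'' hconc'' hpos' hdet h i heq)
      (stmt11_aux N'' N' hcpt' hnest' μ'' μ' hconc' hpos''
        (fun j e => (hdet j e.symm).symm) (fun f hf => (h f hf).symm) i
        (fun j hj => (heq j hj).symm))
  have main : ∀ n : ℕ, ∀ i : Fin r, r - 1 - i.val ≤ n → N' i = N'' i := by
    intro n
    induction n with
    | zero =>
      intro i hi
      refine key i fun j hj => absurd hj ?_
      have h1 := j.isLt
      have h2 := i.isLt
      rw [Fin.lt_def]
      omega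
    | succ n ih =>
      intro i hi
      refine key i fun j hj => ih j ?_
      have h1 := j.isLt
      have h2 : i.val < j.val := hj
      omega
  exact fun i => main (r - 1 - i.val) i le_rfl
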